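/- A (general, not necessarily Gaussian) stochastic sequence [x_0,...,x_N] is reciprocal if and only if it is [k1,N]-CM_F for every k1 in [0,N] and CM_L; equivalently, if and only if it is [0,k2]-CM_L for every k2 in [0,N] and CM_F. -/

import Mathlib

open MeasureTheory ProbabilityTheory Matrix

namespace CMPaper

variable {Ω : Type*}

/-- `x` is a jointly Gaussian family with mean `m` and covariance matrix `C`:
every linear combination of the components is a one-dimensional Gaussian variable
with the induced mean and variance. -/
def IsGaussianFamily [MeasurableSpace Ω] {ι : Type*} [Fintype ι] (μ : Measure Ω)
    (x : ι → Ω → ℝ) (m : ι → ℝ) (C : Matrix ι ι ℝ) : Prop :=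
  ∀ a : ι → ℝ,
    Measure.map (fun ω => ∑ i, a i * x i ω) μ =
      gaussianReal (∑ i, a i * m i) (Real.toNNReal (∑ i, ∑ j, a i * C i j * a j))

variable {N d : ℕ}

/-- The family of scalar components of a sequence of random vectors. -/
def flat (X : Fin (N + 1) → Ω → (Fin d → ℝ)) : Fin (N + 1) × Fin d → Ω → ℝ :=
  fun p ω => X p.1 ω p.2

/-- Markov property: conditioned on `x_j`, `x_k` (k > j) is independent of the past. -/
def IsMarkovSeq [MeasurableSpace Ω] [StandardBorelSpace Ω] (μ : Measure Ω) [IsFiniteMeasure μ]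
    (X : Fin (N + 1) → Ω → (Fin d → ℝ)) (hX : ∀ k, Measurable (X k)) : Prop :=
  ∀ j k : Fin (N + 1), j < k →
    CondIndepFun (MeasurableSpace.comap (X j) inferInstance) ((hX j).comap_le)
      (X k) (fun ω (i : {i : Fin (N + 1) // i < j}) => X i.1 ω) μ

/-- Reciprocal property: conditioned on `(x_{k1}, x_{k2})`, the subsequences inside and
outside of `[k1, k2]` are independent. -/
def IsReciprocalSeq [MeasurableSpace Ω] [StandardBorelSpace Ω] (μ : Measure Ω)
    [IsFiniteMeasure μ]
    (X : Fin (N + 1) → Ω → (Fin d → ℝ)) (hX : ∀ k, Measurable (X k)) : Prop :=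
  ∀ k1 k2 : Fin (N + 1), k1 < k2 →
    CondIndepFun (MeasurableSpace.comap (fun ω => (X k1 ω, X k2 ω)) inferInstance)
      (((hX k1).prodMk (hX k2)).comap_le)
      (fun ω (i : {i : Fin (N + 1) // k1 < i ∧ i < k2}) => X i.1 ω)
      (fun ω (i : {i : Fin (N + 1) // i < k1 ∨ k2 < i}) => X i.1 ω) μ

/-- `[k1,k2]`-CM_c property: for `k1 ≤ j < k ≤ k2`, conditioned on `(x_j, x_c)`,
`x_k` is independent of `[x_i]_{k1}^{j-1}`. -/
def IsCMcOn [MeasurableSpace Ω] [StandardBorelSpace Ω] (μ : Measure Ω) [IsFiniteMeasure μ]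
    (X : Fin (N + 1) → Ω → (Fin d → ℝ)) (hX : ∀ k, Measurable (X k))
    (k1 k2 c : Fin (N + 1)) : Prop :=
  ∀ j k : Fin (N + 1), k1 ≤ j → j < k → k ≤ k2 →
    CondIndepFun (MeasurableSpace.comap (fun ω => (X j ω, X c ω)) inferInstance)
      (((hX j).prodMk (hX c)).comap_le)
      (X k) (fun ω (i : {i : Fin (N + 1) // k1 ≤ i ∧ i < j}) => X i.1 ω) μ

/-- The `(i,j)` block (of size `d × d`) of a matrix indexed by `Fin (N+1) × Fin d`. -/
def BlockOf (M : Matrix (Fin (N + 1) × Fin d) (Fin (N + 1) × Fin d) ℝ)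
    (i j : Fin (N + 1)) : Matrix (Fin d) (Fin d) ℝ :=
  fun a b => M (i, a) (j, b)

/-- Block positions `(i,j)` with `|i - j| ≥ 2`. -/
def OffBand (i j : Fin (N + 1)) : Prop := i.1 + 2 ≤ j.1 ∨ j.1 + 2 ≤ i.1

/-- CM_L form: zero blocks off the tridiagonal band, except in the last block row/column. -/
def IsCMLFormB (M : Matrix (Fin (N + 1) × Fin d) (Fin (N + 1) × Fin d) ℝ) : Prop :=
  ∀ i j : Fin (N + 1), OffBand i j → i ≠ Fin.last N → j ≠ Fin.last N → BlockOf M i j = 0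

/-- CM_F form: zero blocks off the tridiagonal band, except in the first block row/column. -/
def IsCMFFormB (M : Matrix (Fin (N + 1) × Fin d) (Fin (N + 1) × Fin d) ℝ) : Prop :=
  ∀ i j : Fin (N + 1), OffBand i j → i ≠ 0 → j ≠ 0 → BlockOf M i j = 0

/-- Cyclic (block) tridiagonal form: zero blocks off the tridiagonal band,
except possibly the corner blocks `(0, N)` and `(N, 0)`. -/
def IsCyclicTridiagB (M : Matrix (Fin (N + 1) × Fin d) (Fin (N + 1) × Fin d) ℝ) : Prop :=
  ∀ i j : Fin (N + 1), OffBand i j → ¬(i = 0 ∧ j = Fin.last N) → ¬(i = Fin.last N ∧ j = 0) →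
    BlockOf M i j = 0

/-- Block tridiagonal form: zero blocks off the tridiagonal band. -/
def IsTridiagB (M : Matrix (Fin (N + 1) × Fin d) (Fin (N + 1) × Fin d) ℝ) : Prop :=
  ∀ i j : Fin (N + 1), OffBand i j → BlockOf M i j = 0

/-- Build a scalar matrix from a block description. -/
def ofBlocks (B : Fin (N + 1) → Fin (N + 1) → Matrix (Fin d) (Fin d) ℝ) :
    Matrix (Fin (N + 1) × Fin d) (Fin (N + 1) × Fin d) ℝ :=
  fun p q => B p.1 q.1 p.2 q.2

end CMPaper

namespace CMPaper

variable {N d : ℕ}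

/-- Block-diagonal noise covariance matrix `diag(G_0, …, G_N)`. -/
def noiseCov (Gk : Fin (N + 1) → Matrix (Fin d) (Fin d) ℝ) :
    Matrix (Fin (N + 1) × Fin d) (Fin (N + 1) × Fin d) ℝ :=
  ofBlocks (fun i j => if i = j then Gk i else 0)

/-- The block matrix `𝓖` of the forward CM_L model with boundary condition
`x_0 = e_0`, `x_N = G_{N,0} x_0 + e_N`: identity diagonal, `-F k = -G_{k,k-1}` on the
subdiagonal for `k = 1, …, N-1`, `-H k = -G_{k,N}` in the last block column for
`k = 1, …, N-1`, and `-K = -G_{N,0}` at position `(N, 0)`. -/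
def cmlModelMatBC1 (F H : Fin (N + 1) → Matrix (Fin d) (Fin d) ℝ)
    (K : Matrix (Fin d) (Fin d) ℝ) :
    Matrix (Fin (N + 1) × Fin d) (Fin (N + 1) × Fin d) ℝ :=
  ofBlocks (fun i j =>
    if i = j then 1
    else if j.1 + 1 = i.1 ∧ i ≠ Fin.last N then -(F i)
    else if j = Fin.last N ∧ i ≠ Fin.last N ∧ i ≠ 0 then -(H i)
    else if i = Fin.last N ∧ j = 0 then -K
    else 0)

/-- The block matrix `𝓖` of the forward CM_L model with boundary condition
`x_N = e_N`, `x_0 = G_{0,N} x_N + e_0`: identity diagonal, `-F k = -G_{k,k-1}` on the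
subdiagonal for `k = 1, …, N-1`, and `-H k = -G_{k,N}` in the last block column for
`k = 0, …, N-1`. -/
def cmlModelMatBC2 (F H : Fin (N + 1) → Matrix (Fin d) (Fin d) ℝ) :
    Matrix (Fin (N + 1) × Fin d) (Fin (N + 1) × Fin d) ℝ :=
  ofBlocks (fun i j =>
    if i = j then 1
    else if j.1 + 1 = i.1 ∧ i ≠ Fin.last N then -(F i)
    else if j = Fin.last N ∧ i ≠ Fin.last N then -(H i)
    else 0)

/-- The block matrix `𝓕` of the forward CM_F model: identity diagonal, `-2 G_{1,0}` at
`(1,0)`, `-Gsub k = -G_{k,k-1}` on the subdiagonal for `k = 2, …, N`, and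
`-Gcol k = -G_{k,0}` in the first block column for `k = 2, …, N`. -/
def cmfModelMat (Gsub Gcol : Fin (N + 1) → Matrix (Fin d) (Fin d) ℝ) :
    Matrix (Fin (N + 1) × Fin d) (Fin (N + 1) × Fin d) ℝ :=
  ofBlocks (fun i j =>
    if i = j then 1
    else if i.1 = 1 ∧ j = 0 then -(2 • Gsub i)
    else if j.1 + 1 = i.1 then -(Gsub i)
    else if j = 0 ∧ 2 ≤ i.1 then -(Gcol i)
    else 0)

end CMPaper


/-!
Conditional independence of σ-algebras satisfies the graphoid rules: decomposition, weak union and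
contraction. The last two follow from the characterisation `m₁ ⊥ m₂ | m'` iff
`E[1_s | m' ⊔ m₂] = E[1_s | m']` for every `s ∈ m₁`, whose forward direction is a π-λ argument on
the sets `B ∩ t`, `B ∈ m'`, `t ∈ m₂`.

Reciprocity gives the CM properties by decomposition alone. Conversely, a `[k1,k2]`-CM_c sequence
is Markov given `x_c`, so by induction (weak union, then contraction) its future after `j` is
independent of its past before `j` given `(x_j, x_c)`. For `k1 < k2`, CM_F with `c = k1` makes
`(x_i)_{k1<i<k2}` independent of the future after `k2` given `(x_{k1}, x_{k2})`, and CM_L makes it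
independent of the past before `k1` given `x_{k1}`, `x_N` and everything from `k2` on; contraction
combines the two into reciprocity. The second equivalence is the mirror image, with the roles of
the past and the future exchanged.
-/

open MeasureTheory ProbabilityTheory Set

namespace MeasurableSpace

variable {Ω : Type*}

theorem isPiSystem_image2_inter (m₁ m₂ : MeasurableSpace Ω) :
    IsPiSystem (image2 (· ∩ ·) {s | MeasurableSet[m₁] s} {t | MeasurableSet[m₂] t}) := by
  rintro _ ⟨s₁, hs₁, t₁, ht₁, rfl⟩ _ ⟨s₂, hs₂, t₂, ht₂, rfl⟩ -
  exact ⟨s₁ ∩ s₂, hs₁.inter hs₂, t₁ ∩ t₂, ht₁.inter ht₂, inter_inter_inter_comm _ _ _ _⟩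

theorem sup_eq_generateFrom_image2_inter (m₁ m₂ : MeasurableSpace Ω) :
    m₁ ⊔ m₂ =
      generateFrom (image2 (· ∩ ·) {s | MeasurableSet[m₁] s} {t | MeasurableSet[m₂] t}) := by
  refine le_antisymm (sup_le ?_ ?_) (generateFrom_le ?_)
  · exact fun s hs => measurableSet_generateFrom ⟨s, hs, univ, .univ, inter_univ s⟩
  · exact fun t ht => measurableSet_generateFrom ⟨univ, .univ, t, ht, univ_inter t⟩
  · rintro _ ⟨s, hs, t, ht, rfl⟩
    exact (le_sup_left (b := m₂) s hs).inter (le_sup_right (a := m₁) t ht)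

end MeasurableSpace

namespace MeasureTheory

variable {Ω : Type*} {m mΩ : MeasurableSpace Ω} {μ : Measure Ω}

theorem setIntegral_eq_of_isPiSystem (hm : m ≤ mΩ) {C : Set (Set Ω)}
    (hgen : m = MeasurableSpace.generateFrom C) (hC : IsPiSystem C) {f g : Ω → ℝ}
    (hf : Integrable f μ) (hg : Integrable g μ) (huniv : ∫ x, f x ∂μ = ∫ x, g x ∂μ)
    (hbasic : ∀ s ∈ C, ∫ x in s, f x ∂μ = ∫ x in s, g x ∂μ) {s : Set Ω}
    (hs : MeasurableSet[m] s) : ∫ x in s, f x ∂μ = ∫ x in s, g x ∂μ := by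
  induction s, hs using MeasurableSpace.induction_on_inter hgen hC with
  | empty => simp
  | basic t ht => exact hbasic t ht
  | compl t ht _ =>
    have hf' := integral_add_compl (hm t ht) hf
    have hg' := integral_add_compl (hm t ht) hg
    linarith
  | iUnion u hdisj hu ih =>
    rw [integral_iUnion (fun i => hm _ (hu i)) hdisj hf.integrableOn,
      integral_iUnion (fun i => hm _ (hu i)) hdisj hg.integrableOn]
    exact tsum_congr ih

theorem condExp_indicator_condExp [IsFiniteMeasure μ] (f : Ω → ℝ) {t : Set Ω}
    (ht : MeasurableSet t) : μ[t.indicator (μ[f | m]) | m] =ᵐ[μ] μ[f | m] * μ⟦t | m⟧ := by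
  have hmul : t.indicator (μ[f | m]) = μ[f | m] * t.indicator fun _ => (1 : ℝ) := by
    ext x
    by_cases hx : x ∈ t <;> simp [hx]
  rw [hmul]
  refine condExp_mul_of_stronglyMeasurable_left stronglyMeasurable_condExp ?_
    ((integrable_const 1).indicator ht)
  exact hmul ▸ integrable_condExp.indicator ht

end MeasureTheory

namespace ProbabilityTheory

section CondExpCharacterization

variable {Ω : Type*} {m' m₁ m₂ m₃ mΩ : MeasurableSpace Ω} [StandardBorelSpace Ω]
  {μ : Measure Ω} [IsFiniteMeasure μ]

theorem CondIndep.setIntegral_condExp_indicator_inter {hm' : m' ≤ mΩ} (hm₁ : m₁ ≤ mΩ)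
    (hm₂ : m₂ ≤ mΩ) (h : CondIndep m' m₁ m₂ hm' μ) {s B t : Set Ω} (hs : MeasurableSet[m₁] s)
    (hB : MeasurableSet[m'] B) (ht : MeasurableSet[m₂] t) :
    ∫ x in B ∩ t, (μ⟦s | m'⟧) x ∂μ = ∫ x in B ∩ t, s.indicator (fun _ => (1 : ℝ)) x ∂μ := by
  have hs' := hm₁ s hs
  have ht' := hm₂ t ht
  have hprod := (condIndep_iff m' m₁ m₂ hm' hm₁ hm₂ μ).1 h s t hs ht
  calc ∫ x in B ∩ t, (μ⟦s | m'⟧) x ∂μ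
      = ∫ x in B, t.indicator (μ⟦s | m'⟧) x ∂μ := (setIntegral_indicator ht').symm
    _ = ∫ x in B, μ[t.indicator (μ⟦s | m'⟧) | m'] x ∂μ :=
        (setIntegral_condExp hm' (integrable_condExp.indicator ht') hB).symm
    _ = ∫ x in B, (μ⟦s ∩ t | m'⟧) x ∂μ :=
        setIntegral_congr_ae (hm' B hB)
          (((condExp_indicator_condExp _ ht').trans hprod.symm).mono fun x hx _ => hx)
    _ = ∫ x in B, (s ∩ t).indicator (fun _ => (1 : ℝ)) x ∂μ :=
        setIntegral_condExp hm'
          ((integrable_const (μ := μ) (1 : ℝ)).indicator (hs'.inter ht')) hB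
    _ = ∫ x in B ∩ t, s.indicator (fun _ => (1 : ℝ)) x ∂μ := by
        rw [inter_comm s t, ← indicator_indicator, setIntegral_indicator ht']

theorem CondIndep.condExp_indicator_sup_ae_eq {hm' : m' ≤ mΩ} (hm₁ : m₁ ≤ mΩ)
    (hm₂ : m₂ ≤ mΩ) (h : CondIndep m' m₁ m₂ hm' μ) {s : Set Ω} (hs : MeasurableSet[m₁] s) :
    μ⟦s | m' ⊔ m₂⟧ =ᵐ[μ] μ⟦s | m'⟧ := by
  have hs' := (integrable_const (μ := μ) (1 : ℝ)).indicator (hm₁ s hs)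
  refine (ae_eq_condExp_of_forall_setIntegral_eq (sup_le hm' hm₂) hs'
    (fun _ _ _ => integrable_condExp.integrableOn) (fun A hA _ => ?_)
    (stronglyMeasurable_condExp.mono (le_sup_left : m' ≤ m' ⊔ m₂)).aestronglyMeasurable).symm
  refine setIntegral_eq_of_isPiSystem (sup_le hm' hm₂)
    (MeasurableSpace.sup_eq_generateFrom_image2_inter m' m₂)
    (MeasurableSpace.isPiSystem_image2_inter m' m₂) integrable_condExp hs'
    (integral_condExp hm') ?_ hA
  rintro _ ⟨B, hB, t, ht, rfl⟩
  exact h.setIntegral_condExp_indicator_inter hm₁ hm₂ hs hB ht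

theorem condIndep_of_condExp_indicator_sup_ae_eq (hm' : m' ≤ mΩ) (hm₁ : m₁ ≤ mΩ)
    (hm₂ : m₂ ≤ mΩ) (h : ∀ s, MeasurableSet[m₁] s → μ⟦s | m' ⊔ m₂⟧ =ᵐ[μ] μ⟦s | m'⟧) :
    CondIndep m' m₁ m₂ hm' μ := by
  refine (condIndep_iff m' m₁ m₂ hm' hm₁ hm₂ μ).2 fun s t hs ht => ?_
  have hs' := hm₁ s hs
  have ht' := hm₂ t ht
  have hpull : μ⟦s ∩ t | m' ⊔ m₂⟧ =ᵐ[μ] t.indicator (μ⟦s | m'⟧) := by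
    rw [inter_comm, ← indicator_indicator]
    filter_upwards [condExp_indicator ((integrable_const (μ := μ) (1 : ℝ)).indicator hs')
      (le_sup_right (a := m') t ht), h s hs] with x hx hx'
    rw [hx]
    by_cases hxt : x ∈ t <;> simp [hxt, hx']
  calc μ⟦s ∩ t | m'⟧ =ᵐ[μ] μ[μ⟦s ∩ t | m' ⊔ m₂⟧ | m'] :=
        (condExp_condExp_of_le le_sup_left (sup_le hm' hm₂)).symm
    _ =ᵐ[μ] μ[t.indicator (μ⟦s | m'⟧) | m'] := condExp_congr_ae hpull
    _ =ᵐ[μ] μ⟦s | m'⟧ * μ⟦t | m'⟧ := condExp_indicator_condExp _ ht'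

theorem CondIndep.weak_union {hm' : m' ≤ mΩ} (hm₁ : m₁ ≤ mΩ) (hm₂ : m₂ ≤ mΩ)
    (hm₃ : m₃ ≤ mΩ) (h : CondIndep m' m₁ (m₂ ⊔ m₃) hm' μ) :
    CondIndep (m' ⊔ m₃) m₁ m₂ (sup_le hm' hm₃) μ := by
  refine condIndep_of_condExp_indicator_sup_ae_eq _ hm₁ hm₂ fun s hs => ?_
  have h₂₃ := h.condExp_indicator_sup_ae_eq hm₁ (sup_le hm₂ hm₃) hs
  have h₃ := (condIndep_of_condIndep_of_le_right h le_sup_right).condExp_indicator_sup_ae_eq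
    hm₁ hm₃ hs
  rw [sup_assoc, sup_comm m₃]
  exact h₂₃.trans h₃.symm

theorem CondIndep.contraction {hm' : m' ≤ mΩ} (hm₁ : m₁ ≤ mΩ) (hm₂ : m₂ ≤ mΩ)
    (hm₃ : m₃ ≤ mΩ) (h₁ : CondIndep (m' ⊔ m₃) m₁ m₂ (sup_le hm' hm₃) μ)
    (h₂ : CondIndep m' m₁ m₃ hm' μ) : CondIndep m' m₁ (m₂ ⊔ m₃) hm' μ := by
  refine condIndep_of_condExp_indicator_sup_ae_eq hm' hm₁ (sup_le hm₂ hm₃) fun s hs => ?_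
  rw [sup_comm m₂, ← sup_assoc]
  exact (h₁.condExp_indicator_sup_ae_eq hm₁ hm₂ hs).trans
    (h₂.condExp_indicator_sup_ae_eq hm₁ hm₃ hs)

theorem condIndep_of_left_le (hm' : m' ≤ mΩ) (h₁ : m₁ ≤ m') (hm₂ : m₂ ≤ mΩ) :
    CondIndep m' m₁ m₂ hm' μ := by
  refine condIndep_of_condExp_indicator_sup_ae_eq hm' (h₁.trans hm') hm₂ fun s hs => ?_
  have hsm : StronglyMeasurable[m'] (s.indicator fun _ => (1 : ℝ)) :=
    stronglyMeasurable_const.indicator (h₁ s hs)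
  have hint := (integrable_const (μ := μ) (1 : ℝ)).indicator ((h₁.trans hm') s hs)
  rw [condExp_of_stronglyMeasurable (sup_le hm' hm₂) (hsm.mono le_sup_left) hint,
    condExp_of_stronglyMeasurable hm' hsm hint]

theorem condIndepFun_iff_condIndep_of_comap_eq {β γ : Type*} [mβ : MeasurableSpace β]
    [mγ : MeasurableSpace γ] {n' : MeasurableSpace Ω} {hm' : m' ≤ mΩ} {hn' : n' ≤ mΩ}
    {f : Ω → β} {g : Ω → γ} (h' : m' = n') (h₁ : mβ.comap f = m₁) (h₂ : mγ.comap g = m₂) :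
    CondIndepFun m' hm' f g μ ↔ CondIndep n' m₁ m₂ hn' μ := by
  subst h' h₁ h₂
  exact condIndepFun_iff_condIndep m' hm' f g μ

end CondExpCharacterization

section SigmaOn

variable {Ω ι β : Type*} {mΩ : MeasurableSpace Ω} [mβ : MeasurableSpace β]

abbrev sigmaOn (X : ι → Ω → β) (S : Set ι) : MeasurableSpace Ω :=
  ⨆ i ∈ S, mβ.comap (X i)

variable {X : ι → Ω → β}

theorem sigmaOn_le (hX : ∀ i, Measurable (X i)) (S : Set ι) : sigmaOn X S ≤ mΩ :=
  iSup₂_le fun i _ => (hX i).comap_le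

theorem sigmaOn_union (S T : Set ι) : sigmaOn X (S ∪ T) = sigmaOn X S ⊔ sigmaOn X T :=
  iSup_union

theorem sigmaOn_mono {S T : Set ι} (h : S ⊆ T) : sigmaOn X S ≤ sigmaOn X T :=
  biSup_mono h

theorem sigmaOn_singleton (i : ι) : sigmaOn X {i} = mβ.comap (X i) :=
  iSup_singleton

theorem comap_prodMk_eq_sigmaOn (i j : ι) :
    (inferInstance : MeasurableSpace (β × β)).comap (fun ω => (X i ω, X j ω)) =
      sigmaOn X {i, j} := by
  rw [insert_eq, sigmaOn_union, sigmaOn_singleton, sigmaOn_singleton,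
    show (inferInstance : MeasurableSpace (β × β)) = mβ.comap Prod.fst ⊔ mβ.comap Prod.snd from rfl,
    MeasurableSpace.comap_sup, MeasurableSpace.comap_comp, MeasurableSpace.comap_comp]
  rfl

theorem comap_restrict_eq_sigmaOn (P : ι → Prop) :
    MeasurableSpace.pi.comap (fun ω (i : {i // P i}) => X i.1 ω) = sigmaOn X {i | P i} := by
  simp only [MeasurableSpace.pi, MeasurableSpace.comap_iSup, MeasurableSpace.comap_comp]
  exact iSup_subtype

end SigmaOn

section FamilyCondIndep

variable {Ω ι β : Type*} {mΩ : MeasurableSpace Ω} [StandardBorelSpace Ω] [MeasurableSpace β]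
  {X : ι → Ω → β}

/-- `X_A` and `X_B` are conditionally independent given `X_S`. -/
def CondIndepGiven (hX : ∀ i, Measurable (X i)) (S A B : Set ι) (μ : Measure Ω)
    [IsFiniteMeasure μ] : Prop :=
  CondIndep (sigmaOn X S) (sigmaOn X A) (sigmaOn X B) (sigmaOn_le hX S) μ

namespace CondIndepGiven

variable {hX : ∀ i, Measurable (X i)} {S A B C : Set ι} {μ : Measure Ω} [IsFiniteMeasure μ]

theorem symm (h : CondIndepGiven hX S A B μ) : CondIndepGiven hX S B A μ :=
  CondIndep.symm h

theorem mono_left {A' : Set ι} (h : CondIndepGiven hX S A B μ) (hA : A' ⊆ A) :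
    CondIndepGiven hX S A' B μ :=
  condIndep_of_condIndep_of_le_left h (sigmaOn_mono hA)

theorem mono_right {B' : Set ι} (h : CondIndepGiven hX S A B μ) (hB : B' ⊆ B) :
    CondIndepGiven hX S A B' μ :=
  condIndep_of_condIndep_of_le_right h (sigmaOn_mono hB)

theorem of_subset (hA : A ⊆ S) : CondIndepGiven hX S A B μ :=
  condIndep_of_left_le _ (sigmaOn_mono hA) (sigmaOn_le hX B)

theorem weak_union (h : CondIndepGiven hX S A (B ∪ C) μ) : CondIndepGiven hX (S ∪ C) A B μ := by
  unfold CondIndepGiven at h ⊢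
  rw [sigmaOn_union] at h
  convert h.weak_union (sigmaOn_le hX A) (sigmaOn_le hX B) (sigmaOn_le hX C) using 1
  exact sigmaOn_union S C

theorem contraction (h₁ : CondIndepGiven hX (S ∪ C) A B μ) (h₂ : CondIndepGiven hX S A C μ) :
    CondIndepGiven hX S A (B ∪ C) μ := by
  unfold CondIndepGiven at h₁ h₂ ⊢
  rw [sigmaOn_union]
  refine CondIndep.contraction (sigmaOn_le hX A) (sigmaOn_le hX B) (sigmaOn_le hX C) ?_ h₂
  convert h₁ using 1
  exact (sigmaOn_union S C).symm

end CondIndepGiven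

end FamilyCondIndep

end ProbabilityTheory

namespace CMPaper

variable {Ω : Type*} {mΩ : MeasurableSpace Ω} [StandardBorelSpace Ω] {μ : Measure Ω}
  [IsFiniteMeasure μ] {N d : ℕ} {X : Fin (N + 1) → Ω → (Fin d → ℝ)}
  {hX : ∀ k, Measurable (X k)}

theorem isReciprocalSeq_iff_condIndepGiven :
    IsReciprocalSeq μ X hX ↔ ∀ k1 k2 : Fin (N + 1), k1 < k2 →
      CondIndepGiven hX {k1, k2} (Ioo k1 k2) {i | i < k1 ∨ k2 < i} μ :=
  forall₃_congr fun k1 k2 _ => condIndepFun_iff_condIndep_of_comap_eq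
    (comap_prodMk_eq_sigmaOn k1 k2) (comap_restrict_eq_sigmaOn _) (comap_restrict_eq_sigmaOn _)

theorem isCMcOn_iff_condIndepGiven {k1 k2 c : Fin (N + 1)} : IsCMcOn μ X hX k1 k2 c ↔
    ∀ j k : Fin (N + 1), k1 ≤ j → j < k → k ≤ k2 → CondIndepGiven hX {j, c} {k} (Ico k1 j) μ :=
  forall₂_congr fun j k => imp_congr_right fun _ => imp_congr_right fun _ =>
    imp_congr_right fun _ => condIndepFun_iff_condIndep_of_comap_eq
      (comap_prodMk_eq_sigmaOn j c) (sigmaOn_singleton k).symm (comap_restrict_eq_sigmaOn _)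

theorem IsReciprocalSeq.isCMcOn_left (hR : IsReciprocalSeq μ X hX) (k1 k2 : Fin (N + 1)) :
    IsCMcOn μ X hX k1 k2 k1 := by
  refine isCMcOn_iff_condIndepGiven.2 fun j k hk1j hjk _ => ?_
  rcases hk1j.eq_or_lt with rfl | hlt
  · exact (CondIndepGiven.of_subset (by simp)).symm
  · have hinner : CondIndepGiven hX ({j, k1} ∪ {k1}) {k} (Ioo k1 j) μ := by
      rw [union_eq_left.2 (by simp), pair_comm]
      exact ((isReciprocalSeq_iff_condIndepGiven.1 hR k1 j hlt).mono_right
        (singleton_subset_iff.2 (Or.inr hjk))).symm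
    have := hinner.contraction (CondIndepGiven.of_subset (by simp)).symm
    rwa [Ioo_union_left hlt] at this

theorem IsReciprocalSeq.isCMcOn_right (hR : IsReciprocalSeq μ X hX) (k1 k2 : Fin (N + 1)) :
    IsCMcOn μ X hX k1 k2 k2 := by
  refine isCMcOn_iff_condIndepGiven.2 fun j k _ hjk hkk2 => ?_
  rcases hkk2.eq_or_lt with rfl | hlt
  · exact CondIndepGiven.of_subset (by simp)
  · exact ((isReciprocalSeq_iff_condIndepGiven.1 hR j k2 (hjk.trans hlt)).mono_left
      (singleton_subset_iff.2 ⟨hjk, hlt⟩)).mono_right fun i hi => Or.inl hi.2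

theorem IsCMcOn.condIndepGiven_Ioc_Ico {k1 k2 c : Fin (N + 1)} (h : IsCMcOn μ X hX k1 k2 c)
    {j k : Fin (N + 1)} (hk1j : k1 ≤ j) (hjk : j ≤ k) (hkk2 : k ≤ k2) :
    CondIndepGiven hX {j, c} (Ioc j k) (Ico k1 j) μ := by
  induction k using Fin.induction with
  | zero => exact CondIndepGiven.of_subset (by simp)
  | succ i ih =>
    rcases hjk.eq_or_lt with rfl | hlt
    · exact CondIndepGiven.of_subset (by simp)
    have hji : j ≤ i.castSucc := Fin.le_castSucc_iff.2 hlt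
    have hpast := ih hji (Fin.castSucc_lt_succ.le.trans hkk2)
    have hstep := isCMcOn_iff_condIndepGiven.1 h i.castSucc i.succ (hk1j.trans hji)
      Fin.castSucc_lt_succ hkk2
    rw [← Ico_union_Ico_eq_Ico hk1j hji] at hstep
    have hnext := hstep.weak_union
    rw [show {i.castSucc, c} ∪ Ico j i.castSucc = {j, c} ∪ Ioc j i.castSucc by
      ext l; simp; grind] at hnext
    have hfuture := hnext.symm.contraction hpast.symm
    rw [show {i.succ} ∪ Ioc j i.castSucc = Ioc j i.succ by ext l; simp; grind] at hfuture
    exact hfuture.symm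

theorem isReciprocalSeq_of_isCMcOn_left_of_isCMcOn_last
    (hF : ∀ k1, IsCMcOn μ X hX k1 (Fin.last N) k1)
    (hL : IsCMcOn μ X hX 0 (Fin.last N) (Fin.last N)) : IsReciprocalSeq μ X hX := by
  refine isReciprocalSeq_iff_condIndepGiven.2 fun k1 k2 h12 => ?_
  have hfuture : CondIndepGiven hX {k1, k2} (Ioo k1 k2) (Ioi k2) μ := by
    have := (hF k1).condIndepGiven_Ioc_Ico h12.le (Fin.le_last k2) le_rfl
    rw [pair_comm, show Ioc k2 (Fin.last N) = Ioi k2 by ext l; simp; grind] at this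
    exact (this.mono_right Ioo_subset_Ico_self).symm
  have hpast := (hL.condIndepGiven_Ioc_Ico (Fin.zero_le k1) (Fin.le_last k1) le_rfl).symm
  rw [show Ioc k1 (Fin.last N) = Ioo k1 k2 ∪ Ici k2 by ext l; simp; grind] at hpast
  have hpast' := hpast.weak_union
  rw [show {k1, Fin.last N} ∪ Ici k2 = {k1, k2} ∪ Ioi k2 by ext l; simp; grind] at hpast'
  have := hpast'.symm.contraction hfuture
  rwa [show Ico 0 k1 ∪ Ioi k2 = {i | i < k1 ∨ k2 < i} by ext l; simp] at this

theorem isReciprocalSeq_of_isCMcOn_right_of_isCMcOn_zero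
    (hL : ∀ k2, IsCMcOn μ X hX 0 k2 k2)
    (hF : IsCMcOn μ X hX 0 (Fin.last N) 0) : IsReciprocalSeq μ X hX := by
  refine isReciprocalSeq_iff_condIndepGiven.2 fun k1 k2 h12 => ?_
  have hpast : CondIndepGiven hX {k1, k2} (Ioo k1 k2) (Ico 0 k1) μ :=
    ((hL k2).condIndepGiven_Ioc_Ico (Fin.zero_le k1) h12.le le_rfl).mono_left
      Ioo_subset_Ioc_self
  have hfuture := hF.condIndepGiven_Ioc_Ico (Fin.zero_le k2) (Fin.le_last k2) le_rfl
  rw [show Ico 0 k2 = Ioo k1 k2 ∪ Iic k1 by ext l; simp; grind] at hfuture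
  have hfuture' := hfuture.weak_union
  rw [show {k2, 0} ∪ Iic k1 = {k1, k2} ∪ Ico 0 k1 by ext l; simp; grind] at hfuture'
  have := hfuture'.symm.contraction hpast
  rwa [show Ioc k2 (Fin.last N) ∪ Ico 0 k1 = {i | i < k1 ∨ k2 < i} by
    ext l; simp; grind] at this

end CMPaper

theorem stmt_6_general {Ω : Type*} [MeasurableSpace Ω] [StandardBorelSpace Ω]
    (μ : Measure Ω) [IsProbabilityMeasure μ] {N d : ℕ}
    (X : Fin (N + 1) → Ω → (Fin d → ℝ)) (hX : ∀ k, Measurable (X k)) :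
    (CMPaper.IsReciprocalSeq μ X hX ↔
      ((∀ k1 : Fin (N + 1), CMPaper.IsCMcOn μ X hX k1 (Fin.last N) k1) ∧
        CMPaper.IsCMcOn μ X hX 0 (Fin.last N) (Fin.last N))) ∧
    (CMPaper.IsReciprocalSeq μ X hX ↔
      ((∀ k2 : Fin (N + 1), CMPaper.IsCMcOn μ X hX 0 k2 k2) ∧
        CMPaper.IsCMcOn μ X hX 0 (Fin.last N) 0)) :=
  ⟨⟨fun hR => ⟨fun k1 => hR.isCMcOn_left k1 _, hR.isCMcOn_right 0 _⟩,
      fun h => CMPaper.isReciprocalSeq_of_isCMcOn_left_of_isCMcOn_last h.1 h.2⟩,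
    ⟨fun hR => ⟨fun k2 => hR.isCMcOn_right 0 k2, hR.isCMcOn_left 0 _⟩,
      fun h => CMPaper.isReciprocalSeq_of_isCMcOn_right_of_isCMcOn_zero h.1 h.2⟩⟩

/-- A (general) stochastic sequence is reciprocal iff it is `[k1,N]`-CM_F for
every `k1` and CM_L; equivalently, iff it is `[0,k2]`-CM_L for every `k2` and CM_F. -/
theorem stmt_6 {Ω : Type*} [MeasurableSpace Ω] [StandardBorelSpace Ω] [Nonempty Ω]
    (μ : Measure Ω) [IsProbabilityMeasure μ] {N d : ℕ}
    (X : Fin (N + 1) → Ω → (Fin d → ℝ)) (hX : ∀ k, Measurable (X k)) :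
    (CMPaper.IsReciprocalSeq μ X hX ↔
      ((∀ k1 : Fin (N + 1), CMPaper.IsCMcOn μ X hX k1 (Fin.last N) k1) ∧
        CMPaper.IsCMcOn μ X hX 0 (Fin.last N) (Fin.last N))) ∧
    (CMPaper.IsReciprocalSeq μ X hX ↔
      ((∀ k2 : Fin (N + 1), CMPaper.IsCMcOn μ X hX 0 k2 k2) ∧
        CMPaper.IsCMcOn μ X hX 0 (Fin.last N) 0)) :=
  stmt_6_general μ X hX
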